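/- Influence of upweighting a training sample on a test loss (Appendix A.1, Eq. (9)). Let E = ℝ^d with the Euclidean inner product, let R, L, L_test : E → ℝ, and let θ : ℝ → E with θ(0) = θ̂. Assume: (i) the gradient map ∇R : E → E is differentiable at θ̂ with invertible Fréchet derivative H : E → E; (ii) ∇L is continuous at θ̂; (iii) θ is differentiable at 0; (iv) for all ε in some neighborhood of 0, ∇R(θ(ε)) + ε · ∇L(θ(ε)) = 0; (v) L_test is differentiable at θ̂. Then the derivative of the function ε ↦ L_test(θ(ε)) at ε = 0 equals −⟨∇L_test(θ̂), H⁻¹(∇L(θ̂))⟩. -/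

import Mathlib

/-!
Differentiating the stationarity identity `∇R (θ ε) + ε • ∇L (θ ε) = 0` at `ε = 0` gives
`H θ'(0) + ∇L θ̂ = 0`; the term `ε • ∇L (θ ε)` needs only continuity of `∇L`, since its difference
quotient at `0` is `∇L (θ ε)` itself. Hence `θ'(0) = -H⁻¹ (∇L θ̂)`, and the chain rule together with
`D L_test θ̂ = ⟪∇L_test θ̂, ·⟫` gives the formula.
-/

open Topology
open scoped RealInnerProductSpace

section

variable {𝕜 : Type*} [NontriviallyNormedField 𝕜] {E F : Type*}
  [NormedAddCommGroup E] [NormedSpace 𝕜 E] [NormedAddCommGroup F] [NormedSpace 𝕜 F]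

theorem hasDerivAt_sub_smul_of_continuousAt {g : 𝕜 → F} {x : 𝕜} (hg : ContinuousAt g x) :
    HasDerivAt (fun y => (y - x) • g y) (g x) x := by
  rw [hasDerivAt_iff_tendsto_slope]
  refine (hg.tendsto.mono_left nhdsWithin_le_nhds).congr' ?_
  filter_upwards [self_mem_nhdsWithin] with y (hy : y ≠ x)
  rw [slope_def_module, sub_self, zero_smul, sub_zero, smul_smul,
    inv_mul_cancel₀ (sub_ne_zero.mpr hy), one_smul]

theorem HasFDerivAt.hasDerivAt_of_eventually_add_smul_eq_zero {G g : E → F} {T : E ≃L[𝕜] F}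
    {θ : 𝕜 → E} (hG : HasFDerivAt G (T : E →L[𝕜] F) (θ 0)) (hg : ContinuousAt g (θ 0))
    (hθ : DifferentiableAt 𝕜 θ 0) (hzero : ∀ᶠ ε in 𝓝 0, G (θ ε) + ε • g (θ ε) = 0) :
    HasDerivAt θ (-T.symm (g (θ 0))) 0 := by
  have hθ' := hθ.hasDerivAt
  have hsmul : HasDerivAt (fun ε => ε • g (θ ε)) (g (θ 0)) 0 := by
    simpa using hasDerivAt_sub_smul_of_continuousAt (hg.comp hθ.continuousAt)
  have hsum : HasDerivAt (fun ε => G (θ ε) + ε • g (θ ε)) (T (deriv θ 0) + g (θ 0)) 0 :=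
    (hG.comp_hasDerivAt 0 hθ').add hsmul
  have hderiv_eq_zero : T (deriv θ 0) + g (θ 0) = 0 :=
    ((hasDerivAt_const (0 : 𝕜) (0 : F)).unique
      (hsum.congr_of_eventuallyEq (hzero.mono fun _ h => h.symm))).symm
  have hderiv : deriv θ 0 = -T.symm (g (θ 0)) := by
    rw [← T.symm_apply_apply (deriv θ 0), eq_neg_of_add_eq_zero_left hderiv_eq_zero, map_neg]
  exact hderiv ▸ hθ'

end

/-- **Influence of upweighting a training sample on a test loss (Appendix A.1, Eq. (9)).**
Under the same assumptions as the first-order parameter response, and with `L_test`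
differentiable at `θ̂`, the derivative of `ε ↦ L_test(θ(ε))` at `ε = 0` equals
`-⟪∇L_test(θ̂), H⁻¹(∇L(θ̂))⟫`. -/
theorem upweighting_influence_on_test_loss
    {d : ℕ} (R L Ltest : EuclideanSpace ℝ (Fin d) → ℝ)
    (θ : ℝ → EuclideanSpace ℝ (Fin d)) (θhat : EuclideanSpace ℝ (Fin d))
    (hθ0 : θ 0 = θhat)
    (H : EuclideanSpace ℝ (Fin d) ≃L[ℝ] EuclideanSpace ℝ (Fin d))
    (hR : HasFDerivAt (fun x => gradient R x)
      (H : EuclideanSpace ℝ (Fin d) →L[ℝ] EuclideanSpace ℝ (Fin d)) θhat)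
    (hL : ContinuousAt (fun x => gradient L x) θhat)
    (hθ : DifferentiableAt ℝ θ 0)
    (hstat : ∀ᶠ ε in nhds (0 : ℝ), gradient R (θ ε) + ε • gradient L (θ ε) = 0)
    (hLtest : DifferentiableAt ℝ Ltest θhat) :
    deriv (fun ε => Ltest (θ ε)) 0
      = -⟪gradient Ltest θhat, H.symm (gradient L θhat)⟫ := by
  subst hθ0
  have hresponse := hR.hasDerivAt_of_eventually_add_smul_eq_zero hL hθ hstat
  refine (hLtest.hasFDerivAt.comp_hasDerivAt 0 hresponse).deriv.trans ?_
  rw [map_neg, inner_gradient_left]
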